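/- A minimally 2-edge-connected multigraph has no three pairwise parallel edges, and if it has a pair of parallel edges between vertices u and v, then the removal of these two edges separates u and v. -/
import Mathlib


/-- A multigraph on vertex type `V` with edge type `E`: each edge has an unordered pair
of endvertices. -/
structure Multigraph (V : Type) (E : Type) where
  ends : E → Sym2 V

namespace Multigraph

variable {V E : Type}

/-- Walks in a multigraph. -/
inductive Walk (G : Multigraph V E) : V → V → Type
  | nil (v : V) : Walk G v v
  | cons {u v w : V} (e : E) (h : G.ends e = s(u, v)) (p : Walk G v w) : Walk G u w

namespace Walk

variable {G : Multigraph V E}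

/-- The list of vertices visited by a walk. -/
def support : ∀ {u v : V}, G.Walk u v → List V
  | _, _, .nil v => [v]
  | u, _, .cons _ _ p => u :: p.support

/-- The list of edges used by a walk. -/
def edges : ∀ {u v : V}, G.Walk u v → List E
  | _, _, .nil _ => []
  | _, _, .cons e _ p => e :: p.edges

end Walk

/-- There is a `u`–`v` walk all of whose edges lie in `B` and all of whose vertices lie in `S`. -/
def ReachableIn (G : Multigraph V E) (S : Set V) (B : Set E) (u v : V) : Prop :=
  ∃ p : G.Walk u v, (∀ e ∈ p.edges, e ∈ B) ∧ ∀ w ∈ p.support, w ∈ S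

/-- The subgraph with vertex set `S` and edge set `B` is connected. -/
def ConnectedOn (G : Multigraph V E) (S : Set V) (B : Set E) : Prop :=
  S.Nonempty ∧ ∀ u ∈ S, ∀ v ∈ S, G.ReachableIn S B u v

/-- The subgraph `(S, B)` has edge-connectivity at least `k`: removing fewer than `k`
edges of `B` never disconnects it. -/
def EdgeConnAtLeastOn (G : Multigraph V E) (S : Set V) (B : Set E) (k : ℕ) : Prop :=
  ∀ F : Finset E, ↑F ⊆ B → F.card < k →
    ∀ u ∈ S, ∀ v ∈ S, G.ReachableIn S (B \ ↑F) u v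

/-- The subgraph `(S, B)` is minimally `2`-edge-connected: its edge-connectivity equals `2`
and deleting any edge decreases the edge-connectivity below `2`. -/
def MinTwoEdgeConnOn (G : Multigraph V E) (S : Set V) (B : Set E) : Prop :=
  G.EdgeConnAtLeastOn S B 2 ∧ ¬ G.EdgeConnAtLeastOn S B 3 ∧
    ∀ e ∈ B, ¬ G.EdgeConnAtLeastOn S (B \ {e}) 2

/-- `G` is minimally `2`-edge-connected. -/
def MinTwoEdgeConn (G : Multigraph V E) : Prop :=
  G.MinTwoEdgeConnOn Set.univ Set.univ

/-- `λ_G(u,v)`: the maximum number of pairwise edge-disjoint `u`–`v` paths in `G`. -/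
noncomputable def lambda (G : Multigraph V E) (u v : V) : ℕ :=
  sSup {k | ∃ p : Fin k → G.Walk u v, (∀ i, (p i).support.Nodup) ∧
    ∀ i j, i ≠ j → ∀ e ∈ (p i).edges, e ∉ (p j).edges}

/-- `κ_G(u,v)`: the maximum number of pairwise internally disjoint `u`–`v` paths in `G`. -/
noncomputable def kappa (G : Multigraph V E) (u v : V) : ℕ :=
  sSup {k | ∃ p : Fin k → G.Walk u v, (∀ i, (p i).support.Nodup) ∧
    ∀ i j, i ≠ j →
      ((∀ w ∈ (p i).support, w ∈ (p j).support → w = u ∨ w = v) ∧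
        ∀ e ∈ (p i).edges, e ∉ (p j).edges)}

open Classical in
/-- The degree of a vertex: the number of edges incident with it. -/
noncomputable def degree (G : Multigraph V E) [Fintype E] (v : V) : ℕ :=
  (Finset.univ.filter fun e => v ∈ G.ends e).card

/-- The average edge-connectivity of `G`: the average of `λ_G(u,v)` over all unordered pairs
of distinct vertices (computed as the sum over ordered pairs divided by `n(n-1)`). -/
noncomputable def avgLambda (G : Multigraph V E) [Fintype V] [DecidableEq V] : ℚ :=
  (∑ p ∈ Finset.univ.offDiag, (G.lambda p.1 p.2 : ℚ)) /
    ((Fintype.card V : ℚ) * ((Fintype.card V : ℚ) - 1))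

/-- `G` is `2`-connected: it has at least three vertices, and deleting any single vertex
leaves a connected graph. -/
def TwoConnected (G : Multigraph V E) [Fintype V] : Prop :=
  3 ≤ Fintype.card V ∧ ∀ x u v : V, u ≠ x → v ≠ x → G.ReachableIn {x}ᶜ Set.univ u v

/-- `f` is a bridge of the spanning subgraph with edge set `B`: its removal separates
its endvertices. -/
def IsBridgeOn (G : Multigraph V E) (B : Set E) (f : E) : Prop :=
  f ∈ B ∧ ∀ x y, G.ends f = s(x, y) → ¬ G.ReachableIn Set.univ (B \ {f}) x y

/-- All endvertices of edges of `B` lie in `S`. -/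
def IsSubgraphPair (G : Multigraph V E) (S : Set V) (B : Set E) : Prop :=
  ∀ e ∈ B, ∀ x, x ∈ G.ends e → x ∈ S

/-- The subgraph `(S, B)` has no cut vertex. -/
def NoCutVertexOn (G : Multigraph V E) (S : Set V) (B : Set E) : Prop :=
  ∀ x, ∀ u ∈ S, ∀ v ∈ S, u ≠ x → v ≠ x → G.ReachableIn (S \ {x}) B u v

/-- `(S, B)` is a block of `G`: a maximal connected subgraph without a cut vertex. -/
def IsBlock (G : Multigraph V E) (S : Set V) (B : Set E) : Prop :=
  G.IsSubgraphPair S B ∧ G.ConnectedOn S B ∧ G.NoCutVertexOn S B ∧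
    ∀ S' B', S ⊆ S' → B ⊆ B' → G.IsSubgraphPair S' B' → G.ConnectedOn S' B' →
      G.NoCutVertexOn S' B' → S' = S ∧ B' = B

end Multigraph

namespace Multigraph
namespace Walk

variable {V E : Type} {G : Multigraph V E}

/-- Concatenation of walks. -/
def append : ∀ {u v w : V}, G.Walk u v → G.Walk v w → G.Walk u w
  | _, _, _, .nil _, q => q
  | _, _, _, .cons e h p, q => .cons e h (p.append q)

theorem edges_append : ∀ {u v w : V} (p : G.Walk u v) (q : G.Walk v w),
    (p.append q).edges = p.edges ++ q.edges
  | _, _, _, .nil _, _ => rfl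
  | _, _, _, .cons e h p, q => by simp [append, edges, edges_append p q]

/-- Reversal of a walk. -/
def reverse : ∀ {u v : V}, G.Walk u v → G.Walk v u
  | _, _, .nil v => .nil v
  | _, _, .cons e h p => p.reverse.append (.cons e (by rw [h, Sym2.eq_swap]) (.nil _))

theorem mem_edges_reverse : ∀ {u v : V} (p : G.Walk u v) (x : E),
    x ∈ p.reverse.edges ↔ x ∈ p.edges
  | _, _, .nil _, _ => Iff.rfl
  | _, _, .cons e h p, x => by
    simp [reverse, edges_append, edges, mem_edges_reverse p x, or_comm]

/-- Edge replacement: each occurrence of `f` in a walk can be replaced by a detour. -/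
theorem replace {f : E} {s t : V} (hf : G.ends f = s(s, t)) (P : E → Prop)
    (W1 : G.Walk s t) (W2 : G.Walk t s)
    (hW1 : ∀ x ∈ W1.edges, P x) (hW2 : ∀ x ∈ W2.edges, P x) :
    ∀ {a b : V} (p : G.Walk a b), (∀ x ∈ p.edges, x ≠ f → P x) →
      ∃ q : G.Walk a b, ∀ x ∈ q.edges, P x
  | _, _, .nil v, _ => ⟨.nil v, by simp [edges]⟩
  | a, b, @Walk.cons _ _ _ _ c _ e h p, hp => by
    obtain ⟨q, hq⟩ := replace hf P W1 W2 hW1 hW2 p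
      (fun x hx hxf => hp x (by simp [edges, hx]) hxf)
    by_cases he : e = f
    · subst he
      rw [h] at hf
      rcases Sym2.eq_iff.mp hf with ⟨rfl, rfl⟩ | ⟨rfl, rfl⟩
      · refine ⟨W1.append q, fun x hx => ?_⟩
        rw [edges_append, List.mem_append] at hx
        exact hx.elim (hW1 x) (hq x)
      · refine ⟨W2.append q, fun x hx => ?_⟩
        rw [edges_append, List.mem_append] at hx
        exact hx.elim (hW2 x) (hq x)
    · refine ⟨.cons e h q, fun x hx => ?_⟩
      rcases (by simpa [edges] using hx : x = e ∨ x ∈ q.edges) with rfl | hx'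
      · exact hp x (by simp [edges]) he
      · exact hq x hx'

end Walk
end Multigraph

/-- A minimally `2`-edge-connected multigraph has no three pairwise parallel edges, and if
it has a pair of parallel edges between vertices `u` and `v`, then the removal of these two
edges separates `u` and `v`. -/
theorem stmt_14 {V E : Type} [Fintype V] [Fintype E] (G : Multigraph V E)
    (h : G.MinTwoEdgeConn) :
    (∀ e f g : E, G.ends e = G.ends f → G.ends f = G.ends g → e = f ∨ e = g ∨ f = g) ∧
      ∀ e f : E, e ≠ f → G.ends e = G.ends f →
        ∀ u v : V, G.ends e = s(u, v) →
          ¬ G.ReachableIn Set.univ (({e, f} : Set E)ᶜ) u v := by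
  obtain ⟨h2, -, hmin⟩ := h
  constructor
  · -- no three parallel edges
    intro e f g hef hfg
    by_contra hcon
    push_neg at hcon
    obtain ⟨hef', heg', hfg'⟩ := hcon
    refine hmin e (Set.mem_univ e) ?_
    intro F hF hFcard a _ b _
    -- pick a parallel edge not in F
    have hcard1 : F.card ≤ 1 := Nat.lt_succ_iff.mp hFcard
    obtain ⟨h', hh'e, hh'F, hh'ends⟩ : ∃ h', h' ≠ e ∧ h' ∉ F ∧ G.ends e = G.ends h' := by
      by_cases hfF : f ∈ F
      · refine ⟨g, fun hg => heg' hg.symm, fun hgF => hfg' ?_, hef.trans hfg⟩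
        exact Finset.card_le_one.mp hcard1 f hfF g hgF
      · exact ⟨f, fun hg => hef' hg.symm, hfF, hef⟩
    obtain ⟨⟨s, t⟩, hst⟩ := Quot.exists_rep (G.ends e)
    have hst : G.ends e = s(s, t) := hst.symm
    obtain ⟨p, hpe, -⟩ := h2 F (by simp) hFcard a (Set.mem_univ a) b (Set.mem_univ b)
    have hpe' : ∀ x ∈ p.edges, x ∉ F := fun x hx => (hpe x hx).2
    set W1 : G.Walk s t := Multigraph.Walk.cons h' (hh'ends.symm.trans hst) (.nil t)
    obtain ⟨q, hq⟩ := Multigraph.Walk.replace (f := e) hst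
      (fun x => x ≠ e ∧ x ∉ F) W1 W1.reverse
      (by rintro x hx
          rcases (by simpa [Multigraph.Walk.edges, W1] using hx : x = h') with rfl
          exact ⟨hh'e, hh'F⟩)
      (by rintro x hx
          rw [Multigraph.Walk.mem_edges_reverse] at hx
          rcases (by simpa [Multigraph.Walk.edges, W1] using hx : x = h') with rfl
          exact ⟨hh'e, hh'F⟩)
      p (fun x hx hxe => ⟨hxe, hpe' x hx⟩)
    exact ⟨q, fun x hx => by
      have := hq x hx
      simp only [Set.mem_diff, Set.mem_univ, Set.mem_singleton_iff, Finset.coe_sort_coe]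
      exact ⟨⟨trivial, this.1⟩, this.2⟩, fun w _ => trivial⟩
  · -- parallel pair separates
    intro e f hne hef u v huv hreach
    obtain ⟨W, hWe, -⟩ := hreach
    have hWe' : ∀ x ∈ W.edges, x ≠ e ∧ x ≠ f := by
      intro x hx
      have := hWe x hx
      simp only [Set.mem_compl_iff, Set.mem_insert_iff, Set.mem_singleton_iff] at this
      push_neg at this
      exact this
    refine hmin e (Set.mem_univ e) ?_
    intro F hF hFcard a _ b _
    have hcard1 : F.card ≤ 1 := Nat.lt_succ_iff.mp hFcard
    have heF : e ∉ F := fun heF => (hF heF).2 rfl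
    by_cases hfF : f ∈ F
    · -- F ⊆ {f}: use walk avoiding e, replace f by the detour W
      have hxF : ∀ x, x ≠ f → x ∉ F := fun x hx hxF =>
        hx (Finset.card_le_one.mp hcard1 x hxF f hfF)
      obtain ⟨p, hpe, -⟩ := h2 {e} (by simp) (by simp) a (Set.mem_univ a) b (Set.mem_univ b)
      have hpe' : ∀ x ∈ p.edges, x ≠ e := by
        intro x hx
        have := (hpe x hx).2
        simpa using this
      obtain ⟨q, hq⟩ := Multigraph.Walk.replace (f := f) (hef ▸ huv)
        (fun x => x ≠ e ∧ x ≠ f) W W.reverse hWe'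
        (fun x hx => hWe' x ((Multigraph.Walk.mem_edges_reverse W x).mp hx))
        p (fun x hx hxf => ⟨hpe' x hx, hxf⟩)
      exact ⟨q, fun x hx => by
        have := hq x hx
        simp only [Set.mem_diff, Set.mem_univ, Set.mem_singleton_iff, Finset.coe_sort_coe]
        exact ⟨⟨trivial, this.1⟩, hxF x this.2⟩, fun w _ => trivial⟩
    · -- f ∉ F: replace e by f
      obtain ⟨p, hpe, -⟩ := h2 F (by simp) hFcard a (Set.mem_univ a) b (Set.mem_univ b)
      have hpe' : ∀ x ∈ p.edges, x ∉ F := fun x hx => (hpe x hx).2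
      set W1 : G.Walk u v := Multigraph.Walk.cons f (hef ▸ huv) (.nil v)
      obtain ⟨q, hq⟩ := Multigraph.Walk.replace (f := e) huv
        (fun x => x ≠ e ∧ x ∉ F) W1 W1.reverse
        (by rintro x hx
            rcases (by simpa [Multigraph.Walk.edges, W1] using hx : x = f) with rfl
            exact ⟨fun hx => hne hx.symm, hfF⟩)
        (by rintro x hx
            rw [Multigraph.Walk.mem_edges_reverse] at hx
            rcases (by simpa [Multigraph.Walk.edges, W1] using hx : x = f) with rfl
            exact ⟨fun hx => hne hx.symm, hfF⟩)
        p (fun x hx hxe => ⟨hxe, hpe' x hx⟩)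
      exact ⟨q, fun x hx => by
        have := hq x hx
        simp only [Set.mem_diff, Set.mem_univ, Set.mem_singleton_iff, Finset.coe_sort_coe]
        exact ⟨⟨trivial, this.1⟩, this.2⟩, fun w _ => trivial⟩
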